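/- The function ζ₀(x) = log Φ(x), where Φ is the standard normal CDF, is strictly concave on ℝ. -/

import Mathlib

open MeasureTheory Real

noncomputable def phi (x : ℝ) : ℝ := (Real.sqrt (2 * Real.pi))⁻¹ * Real.exp (-x ^ 2 / 2)

noncomputable def Phi (x : ℝ) : ℝ := ∫ t in Set.Iic x, phi t

/-!
It suffices that `(log Φ)' = φ / Φ` is strictly decreasing. Since `φ' = -x φ`, the derivative of
`φ / Φ` is `-φ (x Φ + φ) / Φ²`, and `x Φ(x) + φ(x) > 0` because integrating `φ' = -t φ` over
`(-∞, x]` gives `x Φ(x) + φ(x) = ∫_{t ≤ x} (x - t) φ(t) dt`.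
-/

open Filter Topology

lemma phi_pos (x : ℝ) : 0 < phi x := by
  unfold phi; positivity

lemma continuous_phi : Continuous phi := by
  unfold phi; fun_prop

lemma integrable_phi : Integrable phi := by
  refine ((integrable_exp_neg_mul_sq (by norm_num : (0 : ℝ) < 1 / 2)).const_mul
    (Real.sqrt (2 * Real.pi))⁻¹).congr (Eventually.of_forall fun x => ?_)
  unfold phi; ring_nf

lemma integrable_mul_phi : Integrable (fun t => t * phi t) := by
  refine ((integrable_mul_exp_neg_mul_sq (by norm_num : (0 : ℝ) < 1 / 2)).const_mul
    (Real.sqrt (2 * Real.pi))⁻¹).congr (Eventually.of_forall fun x => ?_)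
  unfold phi; ring_nf

lemma hasDerivAt_phi (x : ℝ) : HasDerivAt phi (-(x * phi x)) x := by
  have hexponent : HasDerivAt (fun t : ℝ => -t ^ 2 / 2) (-x) x := by
    have h := ((hasDerivAt_pow 2 x).neg).div_const 2
    norm_num at h
    exact h.congr_deriv (by ring)
  exact (hexponent.exp.const_mul (Real.sqrt (2 * Real.pi))⁻¹).congr_deriv (by unfold phi; ring)

lemma tendsto_phi_atBot : Tendsto phi atBot (𝓝 0) := by
  have hsq : Tendsto (fun x : ℝ => -x ^ 2 / 2) atBot atBot := by
    refine (tendsto_neg_atTop_atBot.comp ?_).atBot_div_const (by norm_num : (0 : ℝ) < 2)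
    simpa only [sq, id] using tendsto_id.atBot_mul_atBot₀ tendsto_id
  have h := (Real.tendsto_exp_comp_nhds_zero.mpr hsq).const_mul (Real.sqrt (2 * Real.pi))⁻¹
  rw [mul_zero] at h
  exact h

lemma setIntegral_Iic_mul_phi (x : ℝ) : ∫ t in Set.Iic x, t * phi t = -phi x := by
  have h := integral_Iic_of_hasDerivAt_of_tendsto' (a := x) (fun t _ => hasDerivAt_phi t)
    integrable_mul_phi.neg.integrableOn tendsto_phi_atBot
  rw [integral_neg, sub_zero] at h
  linarith

lemma Phi_pos (x : ℝ) : 0 < Phi x := by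
  rw [Phi, setIntegral_pos_iff_support_of_nonneg_ae
    (Eventually.of_forall fun t => (phi_pos t).le) integrable_phi.integrableOn]
  have hsub : Set.Iic x ⊆ Function.support phi ∩ Set.Iic x := fun t ht => ⟨(phi_pos t).ne', ht⟩
  exact lt_of_lt_of_le (by simp [Real.volume_Iic]) (measure_mono hsub)

lemma hasDerivAt_Phi (x : ℝ) : HasDerivAt Phi (phi x) x := by
  have hPhi : Phi = fun y => Phi 0 + ∫ t in (0 : ℝ)..y, phi t := by
    funext y
    rw [← intervalIntegral.integral_Iic_sub_Iic integrable_phi.integrableOn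
      integrable_phi.integrableOn, Phi, Phi]
    ring
  rw [hPhi]
  exact (intervalIntegral.integral_hasDerivAt_right integrable_phi.intervalIntegrable
    (continuous_phi.stronglyMeasurableAtFilter _ _) continuous_phi.continuousAt).const_add _

lemma mul_Phi_add_phi_eq_setIntegral (x : ℝ) :
    x * Phi x + phi x = ∫ t in Set.Iic x, (x - t) * phi t := by
  simp only [sub_mul]
  rw [integral_sub (integrable_phi.integrableOn.const_mul x) integrable_mul_phi.integrableOn,
    integral_const_mul, setIntegral_Iic_mul_phi, Phi, sub_neg_eq_add]

lemma mul_Phi_add_phi_pos (x : ℝ) : 0 < x * Phi x + phi x := by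
  have hint : Integrable (fun t => (x - t) * phi t) :=
    ((integrable_phi.const_mul x).sub integrable_mul_phi).congr
      (Eventually.of_forall fun t => (sub_mul x t (phi t)).symm)
  rw [mul_Phi_add_phi_eq_setIntegral, setIntegral_pos_iff_support_of_nonneg_ae
    ((ae_restrict_mem measurableSet_Iic).mono fun t ht =>
      mul_nonneg (sub_nonneg.mpr ht) (phi_pos t).le) hint.integrableOn]
  have hsub : Set.Iio x ⊆ Function.support (fun t => (x - t) * phi t) ∩ Set.Iic x :=
    fun t ht => ⟨mul_ne_zero (sub_ne_zero.mpr ht.ne') (phi_pos t).ne', Set.Iio_subset_Iic_self ht⟩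
  exact lt_of_lt_of_le (by simp [Real.volume_Iio]) (measure_mono hsub)

lemma strictAnti_phi_div_Phi : StrictAnti (fun x => phi x / Phi x) := by
  refine strictAnti_of_hasDerivAt_neg
    (fun x => (hasDerivAt_phi x).div (hasDerivAt_Phi x) (Phi_pos x).ne') fun x => ?_
  have hnum : -(x * phi x) * Phi x - phi x * phi x = -(phi x * (x * Phi x + phi x)) := by ring
  rw [hnum, neg_div, neg_lt_zero]
  exact div_pos (mul_pos (phi_pos x) (mul_Phi_add_phi_pos x)) (pow_pos (Phi_pos x) 2)

theorem logPhi_strictConcave :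
    StrictConcaveOn ℝ Set.univ (fun x => Real.log (Phi x)) := by
  have hlog (x : ℝ) : HasDerivAt (fun x => Real.log (Phi x)) (phi x / Phi x) x :=
    (hasDerivAt_Phi x).log (Phi_pos x).ne'
  refine StrictAnti.strictConcaveOn_univ_of_deriv
    (continuous_iff_continuousAt.mpr fun x => (hlog x).continuousAt) ?_
  rw [funext fun x => (hlog x).deriv]
  exact strictAnti_phi_div_Phi
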